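/- With ω_n = n + 2: (a) for all i, j, m ∈ ℕ such that one of ω_i, ω_j, ω_m equals the sum of the other two (for instance m = i + j + 2), one has 𝔠̄_{ijm} = 0; (b) for all i, j, k, m ∈ ℕ such that one of ω_i, ω_j, ω_k, ω_m equals the sum of the other three (for instance m = i + j + k + 4), one has 𝔠_{ijkm} = 0. -/

import Mathlib

open MeasureTheory

/-- Gegenbauer (ultraspherical) polynomial `C_n^{(2)}` of degree `n` with parameter `2`,
as a real-valued function. -/
noncomputable def geg (n : ℕ) (y : ℝ) : ℝ :=
  ∑ k ∈ Finset.range (n / 2 + 1),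
    (-1:ℝ) ^ k *
      ((Nat.factorial (n - k + 1) : ℝ) /
        ((Nat.factorial k : ℝ) * (Nat.factorial (n - 2 * k) : ℝ))) *
      (2 * y) ^ (n - 2 * k)

/-- The normalization constant `𝔴_n = √(8/π)/√((n+1)(n+3))`. -/
noncomputable def wYM (n : ℕ) : ℝ :=
  Real.sqrt (8 / Real.pi) / Real.sqrt (((n:ℝ) + 1) * ((n:ℝ) + 3))

/-- The quadratic Fourier coefficients `𝔠̄_{ijm}` of the spherically symmetric equivariant
Yang–Mills equation on the Einstein cylinder. -/
noncomputable def cbar (i j m : ℕ) : ℝ :=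
  wYM i * wYM j * wYM m *
    ∫ y in (-1:ℝ)..1, geg i y * geg j y * geg m y * (1 - y ^ 2) ^ ((3:ℝ) / 2)

/-- The cubic Fourier coefficients `𝔠_{ijkm}` of the spherically symmetric equivariant
Yang–Mills equation on the Einstein cylinder. -/
noncomputable def cquad (i j k m : ℕ) : ℝ :=
  wYM i * wYM j * wYM k * wYM m *
    ∫ y in (-1:ℝ)..1, geg i y * geg j y * geg k y * geg m y * (1 - y ^ 2) ^ ((5:ℝ) / 2)

/-!
Write `λ = b + 1`. The explicit coefficients of the Gegenbauer polynomials satisfy the ladder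
identity
`d/dy [(1 - y²)^(λ + 1/2) C_n^(λ+1)] = -((n + 1)(n + 2λ + 1) / 2λ) (1 - y²)^(λ - 1/2) C_{n+1}^(λ)`.
Integrating by parts against a polynomial `p` (the boundary terms vanish at `±1`) trades
`∫ p C_{n+1}^(λ) (1 - y²)^(λ - 1/2)` for `∫ p' C_n^(λ+1) (1 - y²)^(λ + 1/2)`, so by induction
on `n`, `C_n^(λ)` is orthogonal to every polynomial of degree `< n` for the weight
`(1 - y²)^(λ - 1/2)`.

For `λ = 2`: if `m = i + j + 2` then `C_i C_j` has degree `< m`, so `𝔠̄_{ijm} = 0`; if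
`m = i + j + k + 4`, one factor `1 - y²` of the weight `(1 - y²)^(5/2)` joins `C_i C_j C_k` to
a polynomial of degree `i + j + k + 2 < m`, so `𝔠_{ijkm} = 0`. The other resonances follow by
symmetry.
-/

open Polynomial
open scoped Nat

/-- `(n - k + b)! / b!` is the Pochhammer symbol `(b + 1)_(n - k)`. -/
noncomputable def gegenbauerCoeff (b n k : ℕ) : ℝ :=
  (-1) ^ k * (n - k + b)! / (k ! * (n - 2 * k)! * b !)

/-- The Gegenbauer polynomial `C_n^(b+1)`; the shift makes every `b : ℕ` an admissible parameter. -/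
noncomputable def gegenbauer (b n : ℕ) : ℝ[X] :=
  ∑ k ∈ Finset.range (n / 2 + 1), C (gegenbauerCoeff b n k) * (2 * X) ^ (n - 2 * k)

theorem eval_gegenbauer (b n : ℕ) (y : ℝ) :
    (gegenbauer b n).eval y =
      ∑ k ∈ Finset.range (n / 2 + 1), gegenbauerCoeff b n k * (2 * y) ^ (n - 2 * k) := by
  simp [gegenbauer, eval_finsetSum]

theorem eval_derivative_gegenbauer (b n : ℕ) (y : ℝ) :
    (derivative (gegenbauer b n)).eval y =
      ∑ k ∈ Finset.range (n / 2 + 1),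
        2 * (n - 2 * k : ℕ) * gegenbauerCoeff b n k * (2 * y) ^ (n - 2 * k - 1) := by
  simp only [gegenbauer, map_sum, derivative_mul, derivative_C, zero_mul, derivative_pow,
    map_natCast, derivative_ofNat, derivative_X, mul_one, zero_add, eval_finsetSum, eval_mul,
    eval_C, eval_natCast, eval_pow, eval_ofNat, eval_X]
  refine Finset.sum_congr rfl fun k _ => by ring

theorem natDegree_gegenbauer_le (b n : ℕ) : (gegenbauer b n).natDegree ≤ n := by
  refine natDegree_sum_le_of_forall_le _ _ fun k _ => (natDegree_C_mul_le _ _).trans ?_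
  have : ((2 * X : ℝ[X]) ^ (n - 2 * k)).natDegree ≤ n - 2 * k := by compute_degree
  omega

theorem geg_eq_eval_gegenbauer (n : ℕ) (y : ℝ) : geg n y = (gegenbauer 1 n).eval y := by
  simp only [geg, eval_gegenbauer, gegenbauerCoeff, Nat.factorial_one]
  push_cast
  refine Finset.sum_congr rfl fun k _ => by ring

/- The coefficients of `(2y)^(n + 1 - 2k)` on the two sides of `gegenbauer_ladder`, for `k = 0`,
for `0 < k ≤ n / 2`, and for the top index `k = (n + 1) / 2` when `n` is odd. -/

theorem gegenbauerCoeff_ladder_zero (b n : ℕ) :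
    (b + 1) * (n + 2 * b + 3) * gegenbauerCoeff (b + 1) n 0
      = (n + 1) * (n + 2 * b + 3) * gegenbauerCoeff b (n + 1) 0 := by
  simp only [gegenbauerCoeff, Nat.sub_zero, Nat.mul_zero, pow_zero, Nat.factorial_zero,
    Nat.cast_one, one_mul, show n + 1 + b = n + (b + 1) by omega, Nat.factorial_succ]
  push_cast
  field_simp

theorem gegenbauerCoeff_ladder_succ (b k p : ℕ) :
    4 * (b + 1) * (p + 2) * gegenbauerCoeff (b + 1) (2 * k + p + 2) k
      - (b + 1) * (p + 2 * b + 3) * gegenbauerCoeff (b + 1) (2 * k + p + 2) (k + 1)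
      = -((2 * k + p + 3) * (2 * k + p + 2 * b + 5)) *
          gegenbauerCoeff b (2 * k + p + 3) (k + 1) := by
  simp only [gegenbauerCoeff, show 2 * k + p + 2 - k + (b + 1) = k + p + b + 3 by omega,
    show 2 * k + p + 2 - 2 * k = p + 2 by omega,
    show 2 * k + p + 2 - (k + 1) + (b + 1) = k + p + b + 2 by omega,
    show 2 * k + p + 2 - 2 * (k + 1) = p by omega,
    show 2 * k + p + 3 - (k + 1) + b = k + p + b + 2 by omega,
    show 2 * k + p + 3 - 2 * (k + 1) = p + 1 by omega, Nat.factorial_succ, pow_succ]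
  push_cast
  field_simp
  ring

theorem gegenbauerCoeff_ladder_odd (b k : ℕ) :
    4 * (b + 1) * gegenbauerCoeff (b + 1) (2 * k + 1) k
      = -((2 * k + 2) * (2 * k + 2 * b + 4)) * gegenbauerCoeff b (2 * k + 2) (k + 1) := by
  simp only [gegenbauerCoeff, show 2 * k + 1 - k + (b + 1) = k + b + 2 by omega,
    show 2 * k + 1 - 2 * k = 1 by omega, show 2 * k + 2 - (k + 1) + b = k + b + 1 by omega,
    show 2 * k + 2 - 2 * (k + 1) = 0 by omega, Nat.factorial_succ, Nat.factorial_zero, pow_succ]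
  push_cast
  field_simp
  ring

theorem gegenbauer_ladder_lhs_eq_sum (b n : ℕ) (y : ℝ) :
    (2 * b + 2) * ((1 - y ^ 2) * (derivative (gegenbauer (b + 1) n)).eval y
      - (2 * b + 3) * y * (gegenbauer (b + 1) n).eval y)
      = ∑ k ∈ Finset.range (n / 2 + 1),
          4 * (b + 1) * (n - 2 * k : ℕ) * gegenbauerCoeff (b + 1) n k * (2 * y) ^ (n - 2 * k - 1)
        - ∑ k ∈ Finset.range (n / 2 + 1), (b + 1) * ((n - 2 * k : ℕ) + 2 * b + 3) *
          gegenbauerCoeff (b + 1) n k * (2 * y) ^ (n + 1 - 2 * k) := by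
  rw [eval_derivative_gegenbauer, eval_gegenbauer, ← Finset.sum_sub_distrib, Finset.mul_sum,
    Finset.mul_sum, ← Finset.sum_sub_distrib, Finset.mul_sum]
  refine Finset.sum_congr rfl fun k hk => ?_
  obtain ⟨p, rfl⟩ : ∃ p, n = 2 * k + p := ⟨n - 2 * k, by have := Finset.mem_range.1 hk; omega⟩
  rcases p with _ | p
  · simp only [add_zero, Nat.sub_self, Nat.cast_zero, Nat.add_sub_cancel_left]
    ring
  · simp only [show 2 * k + (p + 1) - 2 * k = p + 1 by omega,
      show 2 * k + (p + 1) + 1 - 2 * k = p + 2 by omega, Nat.add_sub_cancel]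
    push_cast
    ring

theorem gegenbauer_ladder (b n : ℕ) (y : ℝ) :
    (2 * b + 2) * ((1 - y ^ 2) * (derivative (gegenbauer (b + 1) n)).eval y
      - (2 * b + 3) * y * (gegenbauer (b + 1) n).eval y)
      = -((n + 1) * (n + 2 * b + 3)) * (gegenbauer b (n + 1)).eval y := by
  rw [gegenbauer_ladder_lhs_eq_sum, eval_gegenbauer, Finset.mul_sum]
  set c := gegenbauerCoeff (b + 1) n
  set q := gegenbauerCoeff b (n + 1)
  set K : ℝ := (n + 1) * (n + 2 * b + 3)
  set A : ℕ → ℝ := fun k => 4 * (b + 1) * (n - 2 * k : ℕ) * c k * (2 * y) ^ (n - 2 * k - 1)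
  set B : ℕ → ℝ := fun k =>
    (b + 1) * ((n - 2 * k : ℕ) + 2 * b + 3) * c k * (2 * y) ^ (n + 1 - 2 * k)
  set R : ℕ → ℝ := fun k => -K * (q k * (2 * y) ^ (n + 1 - 2 * k))
  have paired : ∀ k ∈ Finset.range (n / 2), A k - B (k + 1) = R (k + 1) := by
    intro k hk
    obtain ⟨p, rfl⟩ : ∃ p, n = 2 * k + p + 2 :=
      ⟨n - 2 * k - 2, by have := Finset.mem_range.1 hk; omega⟩
    simp only [A, B, R, K, c, q, show 2 * k + p + 2 - 2 * k = p + 2 by omega,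
      show 2 * k + p + 2 - 2 * (k + 1) = p by omega,
      show 2 * k + p + 2 + 1 - 2 * (k + 1) = p + 1 by omega]
    push_cast
    linear_combination (2 * y) ^ (p + 1) * gegenbauerCoeff_ladder_succ b k p
  have first : -B 0 = R 0 := by
    simp only [B, R, K, c, q, Nat.mul_zero, Nat.sub_zero]
    linear_combination (-(2 * y) ^ (n + 1)) * gegenbauerCoeff_ladder_zero b n
  have hsum := Finset.sum_congr rfl paired
  rw [Finset.sum_sub_distrib] at hsum
  rw [Finset.sum_range_succ A, Finset.sum_range_succ' B, Finset.sum_range_succ' R]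
  rcases Nat.even_or_odd' n with ⟨m, hm | hm⟩
  · have last : A (n / 2) = 0 := by simp [A, show n - 2 * (n / 2) = 0 by omega]
    rw [show (n + 1) / 2 = n / 2 by omega]
    linear_combination hsum + last + first
  · have last : A (n / 2) = R (n / 2 + 1) := by
      subst hm
      simp only [A, R, K, c, q, show (2 * m + 1) / 2 = m by omega,
        show 2 * m + 1 - 2 * m = 1 by omega, show 2 * m + 1 + 1 - 2 * (m + 1) = 0 by omega]
      push_cast
      linear_combination gegenbauerCoeff_ladder_odd b m
    rw [show (n + 1) / 2 = n / 2 + 1 by omega, Finset.sum_range_succ]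
    linear_combination hsum + last + first

theorem Polynomial.degree_derivative_lt_of_degree_lt_add_one {R : Type*} [Semiring R]
    {p : R[X]} {n : ℕ} (hp : p.degree < ↑(n + 1)) : p.derivative.degree < n := by
  rcases eq_or_ne p 0 with rfl | h0
  · simp
  · refine (degree_derivative_lt h0).trans_le (degree_le_of_natDegree_le ?_)
    have := (natDegree_lt_iff_degree_lt h0).2 hp
    omega

theorem one_sub_sq_nonneg_of_mem_uIcc {y : ℝ} (hy : y ∈ Set.uIcc (-1) 1) : 0 ≤ 1 - y ^ 2 := by
  rw [Set.uIcc_of_le (by norm_num)] at hy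
  nlinarith [hy.1, hy.2]

theorem hasDerivAt_weight_mul_gegenbauer (b n : ℕ) {y : ℝ} (hy : y ∈ Set.uIcc (-1) 1) :
    HasDerivAt (fun y => (1 - y ^ 2) ^ ((b : ℝ) + 3 / 2) * (gegenbauer (b + 1) n).eval y)
      (-((n + 1) * (n + 2 * b + 3) / (2 * b + 2)) *
        ((gegenbauer b (n + 1)).eval y * (1 - y ^ 2) ^ ((b : ℝ) + 1 / 2))) y := by
  have hweight : HasDerivAt (fun y : ℝ => (1 - y ^ 2) ^ ((b : ℝ) + 3 / 2))
      (-(2 * y) * ((b : ℝ) + 3 / 2) * (1 - y ^ 2) ^ ((b : ℝ) + 1 / 2)) y := by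
    convert ((hasDerivAt_pow 2 y).const_sub 1).rpow_const (p := (b : ℝ) + 3 / 2)
      (.inr (by linarith [b.cast_nonneg (α := ℝ)])) using 1
    norm_num [show (b : ℝ) + 3 / 2 - 1 = b + 1 / 2 by ring]
  have hsplit :
      (1 - y ^ 2) ^ ((b : ℝ) + 3 / 2) = (1 - y ^ 2) ^ ((b : ℝ) + 1 / 2) * (1 - y ^ 2) := by
    rw [← Real.rpow_add_one' (one_sub_sq_nonneg_of_mem_uIcc hy) (by positivity)]
    norm_num [add_assoc]
  refine (hweight.mul ((gegenbauer (b + 1) n).hasDerivAt y)).congr_deriv ?_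
  rw [hsplit]
  generalize (1 - y ^ 2) ^ ((b : ℝ) + 1 / 2) = w
  field_simp
  linear_combination w * gegenbauer_ladder b n y

theorem integral_eval_mul_gegenbauer_mul_weight_eq_zero (b n : ℕ) {p : ℝ[X]}
    (hp : p.degree < n) :
    ∫ y in (-1 : ℝ)..1,
      p.eval y * (gegenbauer b n).eval y * (1 - y ^ 2) ^ ((b : ℝ) + 1 / 2) = 0 := by
  induction n generalizing b p with
  | zero =>
    obtain rfl : p = 0 := by simpa using hp
    simp
  | succ n ih =>
    have weight : Continuous fun y : ℝ => (1 - y ^ 2) ^ ((b : ℝ) + 1 / 2) :=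
      (Real.continuous_rpow_const (by positivity)).comp (by fun_prop)
    have parts := intervalIntegral.integral_mul_deriv_eq_deriv_mul
      (fun y _ => p.hasDerivAt y) (fun y hy => hasDerivAt_weight_mul_gegenbauer b n hy)
      (p.derivative.continuous.intervalIntegrable _ _)
      ((by fun_prop : Continuous _).intervalIntegrable _ _)
    simp only [neg_mul, mul_neg, intervalIntegral.integral_neg, one_pow, neg_one_sq, sub_self,
      Real.zero_rpow (show (b : ℝ) + 3 / 2 ≠ 0 by positivity), zero_mul, mul_zero, zero_sub,
      neg_inj] at parts
    have lower := ih (b + 1) (degree_derivative_lt_of_degree_lt_add_one hp)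
    rw [show ((b + 1 : ℕ) : ℝ) + 1 / 2 = b + 3 / 2 by push_cast; ring] at lower
    have hκ : ((n : ℝ) + 1) * (n + 2 * b + 3) / (2 * b + 2) ≠ 0 := by positivity
    rw [← mul_right_inj' hκ, mul_zero, ← intervalIntegral.integral_const_mul, ← lower]
    exact (intervalIntegral.integral_congr fun y _ => by ring).trans
      (parts.trans (intervalIntegral.integral_congr fun y _ => by ring))

theorem integral_eval_mul_geg_mul_weight_eq_zero {p : ℝ[X]} {m : ℕ} (hp : p.natDegree < m) :
    ∫ y in (-1 : ℝ)..1, p.eval y * geg m y * (1 - y ^ 2) ^ ((3 : ℝ) / 2) = 0 := by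
  simp only [geg_eq_eval_gegenbauer]
  have h := integral_eval_mul_gegenbauer_mul_weight_eq_zero 1 m
    (degree_le_natDegree.trans_lt (by exact_mod_cast hp))
  rwa [show ((1 : ℕ) : ℝ) + 1 / 2 = 3 / 2 by norm_num] at h

theorem cbar_eq_zero_of_add_lt {i j m : ℕ} (h : i + j < m) : cbar i j m = 0 := by
  have hdeg : (gegenbauer 1 i * gegenbauer 1 j).natDegree < m :=
    (natDegree_mul_le_of_le (natDegree_gegenbauer_le 1 i) (natDegree_gegenbauer_le 1 j)).trans_lt h
  have h := integral_eval_mul_geg_mul_weight_eq_zero hdeg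
  simp only [eval_mul, ← geg_eq_eval_gegenbauer] at h
  rw [cbar, h, mul_zero]

theorem cquad_eq_zero_of_add_lt {i j k m : ℕ} (h : i + j + k + 2 < m) : cquad i j k m = 0 := by
  have hdeg : (gegenbauer 1 i * gegenbauer 1 j * gegenbauer 1 k * (1 - X ^ 2)).natDegree < m := by
    refine (natDegree_mul_le_of_le (natDegree_mul_le_of_le (natDegree_mul_le_of_le
      (natDegree_gegenbauer_le 1 i) (natDegree_gegenbauer_le 1 j)) (natDegree_gegenbauer_le 1 k))
      ?_).trans_lt h
    compute_degree
  have h := integral_eval_mul_geg_mul_weight_eq_zero hdeg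
  simp only [eval_mul, eval_sub, eval_one, eval_pow, eval_X, ← geg_eq_eval_gegenbauer] at h
  have weight_split : ∀ y ∈ Set.uIcc (-1 : ℝ) 1,
      geg i y * geg j y * geg k y * geg m y * (1 - y ^ 2) ^ ((5 : ℝ) / 2)
        = geg i y * geg j y * geg k y * (1 - y ^ 2) * geg m y * (1 - y ^ 2) ^ ((3 : ℝ) / 2) := by
    intro y hy
    rw [show (5 : ℝ) / 2 = 3 / 2 + 1 by norm_num,
      Real.rpow_add_one' (one_sub_sq_nonneg_of_mem_uIcc hy) (by norm_num)]
    ring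
  rw [cquad, intervalIntegral.integral_congr weight_split, h, mul_zero]

theorem cbar_swap_right (i j m : ℕ) : cbar i j m = cbar i m j := by
  simp only [cbar, mul_comm, mul_left_comm, mul_assoc]

theorem cbar_rotate (i j m : ℕ) : cbar i j m = cbar j m i := by
  simp only [cbar, mul_comm, mul_left_comm, mul_assoc]

theorem cquad_swap_right (i j k m : ℕ) : cquad i j k m = cquad i j m k := by
  simp only [cquad, mul_comm, mul_left_comm, mul_assoc]

theorem cquad_rotate (i j k m : ℕ) : cquad i j k m = cquad j k m i := by
  simp only [cquad, mul_comm, mul_left_comm, mul_assoc]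

/-- Vanishing of the Yang–Mills Fourier coefficients on resonant indices where one
frequency `ω_n = n + 2` equals the sum of the others. -/
theorem YM_fourier_coefficients_vanish :
    (∀ i j m : ℕ,
        (m + 2 = (i + 2) + (j + 2) ∨ j + 2 = (i + 2) + (m + 2) ∨
          i + 2 = (j + 2) + (m + 2)) →
        cbar i j m = 0) ∧
    (∀ i j k m : ℕ,
        (m + 2 = (i + 2) + (j + 2) + (k + 2) ∨
          k + 2 = (i + 2) + (j + 2) + (m + 2) ∨
          j + 2 = (i + 2) + (k + 2) + (m + 2) ∨
          i + 2 = (j + 2) + (k + 2) + (m + 2)) →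
        cquad i j k m = 0) := by
  constructor
  · rintro i j m (h | h | h)
    · exact cbar_eq_zero_of_add_lt (by omega)
    · rw [cbar_swap_right]
      exact cbar_eq_zero_of_add_lt (by omega)
    · rw [cbar_rotate]
      exact cbar_eq_zero_of_add_lt (by omega)
  · rintro i j k m (h | h | h | h)
    · exact cquad_eq_zero_of_add_lt (by omega)
    · rw [cquad_swap_right]
      exact cquad_eq_zero_of_add_lt (by omega)
    · rw [cquad_rotate, cquad_rotate]
      exact cquad_eq_zero_of_add_lt (by omega)
    · rw [cquad_rotate]
      exact cquad_eq_zero_of_add_lt (by omega)
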